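/- arXiv:1501.01857 — 4 statements merged into one kernel-verified Lean document; each statement's English description precedes it below -/
import Mathlib

section
/- If a triangle in the Euclidean plane has two congruent interior angle bisectors (each measured from the vertex to the point where the bisector meets the opposite side), then the triangle is isosceles (the Steiner–Lehmus theorem). -/
open EuclideanGeometry

/-!
By the angle bisector theorem, the bisector from `B` cuts `AC` in the ratio `BA : BC`, and Stewart's
theorem then gives its squared length `ac (1 - (b / (a + c))²)` in terms of the side lengths
`a = BC`, `b = CA`, `c = AB`. Equating this with the same expression for the bisector from `C` and
clearing denominators leaves `(c - b) (a + b + c) (a³ + a² (b + c) + 3abc + bc (b + c)) = 0`, and the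
last two factors are positive.
-/

theorem sbtw_of_mem_openSegment {V : Type*} [AddCommGroup V] [Module ℝ V] {x y z : V}
    (h : y ∈ openSegment ℝ x z) (hxz : x ≠ z) : Sbtw ℝ x y z :=
  ⟨mem_segment_iff_wbtw.mp (openSegment_subset_segment ℝ x z h),
    fun hyx ↦ hxz (left_mem_openSegment_iff.mp (hyx ▸ h)),
    fun hyz ↦ hxz (right_mem_openSegment_iff.mp (hyz ▸ h))⟩

/-- The squared length of the bisector of the angle between two sides of lengths `u` and `v` of a
triangle whose third side has length `w`. -/
noncomputable def bisectorLengthSq (u v w : ℝ) : ℝ :=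
  u * v * (1 - (w / (u + v)) ^ 2)

theorem eq_of_bisectorLengthSq_eq {a b c : ℝ} (ha : 0 < a) (hb : 0 < b) (hc : 0 < c)
    (h : bisectorLengthSq b a c = bisectorLengthSq c a b) : b = c := by
  unfold bisectorLengthSq at h
  have hab : a + b ≠ 0 := by positivity
  have hac : c + a ≠ 0 := by positivity
  field_simp at h
  have hfactor : (b - c) * ((a + b + c) * (a ^ 3 + a ^ 2 * (b + c) + 3 * a * b * c + b * c * (b + c)))
      = 0 := by
    linear_combination h
  have hpos : 0 < (a + b + c) * (a ^ 3 + a ^ 2 * (b + c) + 3 * a * b * c + b * c * (b + c)) := by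
    positivity
  exact sub_eq_zero.mp ((mul_eq_zero.mp hfactor).resolve_right hpos.ne')

namespace EuclideanGeometry

variable {V P : Type*} [NormedAddCommGroup V] [InnerProductSpace ℝ V] [MetricSpace P]
  [NormedAddTorsor V P]

theorem dist_mul_dist_eq_dist_mul_dist_of_angle_eq {a b c d : P}
    (habc : ¬Collinear ℝ {a, b, c}) (hd : Sbtw ℝ a d c) (hbis : ∠ a b d = ∠ c b d) :
    dist a d * dist b c = dist d c * dist a b := by
  have hA : ∠ d a b = ∠ b a c := by rw [angle_comm, hd.angle_eq_right]
  have hC : ∠ d c b = ∠ a c b := by rw [angle_comm, hd.symm.angle_eq_right, angle_comm]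
  have hABD := law_sin a b d
  have hCBD := law_sin c b d
  have hABC := law_sin a c b
  have hsinA : 0 < Real.sin (∠ b a c) :=
    sin_pos_of_not_collinear (by rwa [Set.insert_comm])
  have hsinC : 0 < Real.sin (∠ a c b) :=
    sin_pos_of_not_collinear (by rwa [Set.pair_comm])
  -- sine rule: `sin A · AD = sin (∠ABD) · BD = sin C · CD` and `sin C · CB = sin A · AB`
  rw [hA, dist_comm d a] at hABD
  rw [hC, ← hbis] at hCBD
  rw [dist_comm c b, dist_comm b a] at hABC
  apply mul_left_cancel₀ (mul_pos hsinA hsinC).ne'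
  linear_combination Real.sin (∠ a c b) * (dist b c * (hCBD - hABD) + dist d c * hABC)

theorem dist_sq_eq_bisectorLengthSq {a b c d : P}
    (habc : ¬Collinear ℝ {a, b, c}) (hd : Sbtw ℝ a d c) (hbis : ∠ a b d = ∠ c b d) :
    dist b d ^ 2 = bisectorLengthSq (dist b a) (dist b c) (dist a c) := by
  have hratio := dist_mul_dist_eq_dist_mul_dist_of_angle_eq habc hd hbis
  have hstewart := dist_sq_mul_dist_add_dist_sq_mul_dist b a c d hd.angle₁₂₃_eq_pi
  have hsum := dist_eq_add_dist_of_angle_eq_pi hd.angle₁₂₃_eq_pi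
  have hac : 0 < dist a c := dist_pos.mpr hd.left_ne_right
  have hsides : 0 < dist b a + dist b c :=
    add_pos_of_pos_of_nonneg (dist_pos.mpr (ne₁₂_of_not_collinear habc).symm) dist_nonneg
  rw [dist_comm d c, dist_comm a b] at hratio
  have hAD : dist a d * (dist b a + dist b c) = dist a c * dist b a := by
    linear_combination hratio - dist b a * hsum
  have hCD : dist c d * (dist b a + dist b c) = dist a c * dist b c := by
    linear_combination -hratio - dist b c * hsum
  unfold bisectorLengthSq
  field_simp
  apply mul_left_cancel₀ hac.ne'
  linear_combination -(dist b a + dist b c) ^ 2 * hstewart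
    + (dist b a ^ 2 * (dist b a + dist b c) - dist a c ^ 2 * dist b a) * hCD
    + (dist b c ^ 2 - dist a c * dist c d) * (dist b a + dist b c) * hAD

end EuclideanGeometry

/-- Steiner–Lehmus: a triangle with two congruent interior angle bisectors is isosceles. -/
theorem steiner_lehmus
    (A B C D E : EuclideanSpace ℝ (Fin 2))
    (hABC : ¬ Collinear ℝ ({A, B, C} : Set (EuclideanSpace ℝ (Fin 2))))
    (hD : D ∈ openSegment ℝ A C) (hBD : ∠ A B D = ∠ C B D)
    (hE : E ∈ openSegment ℝ A B) (hCE : ∠ A C E = ∠ B C E)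
    (hcong : dist B D = dist C E) :
    dist A B = dist A C := by
  have hACB : ¬ Collinear ℝ ({A, C, B} : Set (EuclideanSpace ℝ (Fin 2))) := by
    rwa [Set.pair_comm]
  have hBD' := dist_sq_eq_bisectorLengthSq hABC
    (sbtw_of_mem_openSegment hD (ne₁₃_of_not_collinear hABC)) hBD
  have hCE' := dist_sq_eq_bisectorLengthSq hACB
    (sbtw_of_mem_openSegment hE (ne₁₂_of_not_collinear hABC)) hCE
  rw [dist_comm B A] at hBD'
  rw [dist_comm C A, dist_comm C B] at hCE'
  have hsq : bisectorLengthSq (dist A B) (dist B C) (dist A C)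
      = bisectorLengthSq (dist A C) (dist B C) (dist A B) := by
    rw [← hBD', ← hCE', hcong]
  exact eq_of_bisectorLengthSq_eq (dist_pos.mpr (ne₂₃_of_not_collinear hABC))
    (dist_pos.mpr (ne₁₂_of_not_collinear hABC)) (dist_pos.mpr (ne₁₃_of_not_collinear hABC)) hsq
end

section
/- Henderson's generalization of the Steiner–Lehmus theorem: let ABC be a triangle, let M lie strictly between A and C, let N lie strictly between A and B, and suppose segments BM and CN intersect in a point S lying on the interior angle bisector from A. If dist B M = dist C N, then dist A B = dist A C. -/
open EuclideanGeometry

open RealInnerProductSpace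

set_option maxHeartbeats 1000000 in
private lemma henderson_algebra (t r σ μ b c g : ℝ)
    (ht0 : 0 < t) (ht1 : t < 1) (hr0 : 0 < r) (hr1 : r < 1)
    (hσ0 : 0 < σ) (hσ1 : σ < 1) (hμ0 : 0 < μ)
    (hb0 : 0 < b) (hc0 : 0 < c) (hglt : g < b * c)
    (hC3 : 1 - t = r * σ) (hC4 : t * μ = 1 - r)
    (hden : b * ((1 - t) * c ^ 2 + t * μ * g) = c * ((1 - t) * g + t * μ * b ^ 2))
    (hE : c ^ 2 - 2 * μ * g + μ ^ 2 * b ^ 2 = b ^ 2 - 2 * σ * g + σ ^ 2 * c ^ 2) :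
    c = b := by
  have hA : (1 - t) * c = t * μ * b := by
    have hfac : ((1 - t) * c - t * μ * b) * (b * c - g) = 0 := by linear_combination hden
    rcases mul_eq_zero.mp hfac with h | h
    · linarith
    · nlinarith [hglt]
  obtain ⟨m, hm⟩ : ∃ m : ℝ, m = μ * b := ⟨_, rfl⟩
  obtain ⟨n, hn⟩ : ∃ n : ℝ, n = σ * c := ⟨_, rfl⟩
  obtain ⟨q, hq⟩ : ∃ q : ℝ, q = (1 - t) * c := ⟨_, rfl⟩
  have hq0 : 0 < q := by rw [hq]; nlinarith
  have hqm : q = t * m := by rw [hq, hm]; linarith [hA]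
  have hqn : q = r * n := by rw [hq, hn]; linear_combination c * hC3
  have hqb : q = (1 - r) * b := by rw [hq]; linear_combination hA + b * hC4
  have h1 : q * (c + m) = m * c := by
    have e1 : q * c = t * m * c := by rw [hqm]
    have e2 : q * m = (1 - t) * c * m := by rw [hq]
    linear_combination e1 + e2
  have h2 : q * (b + n) = n * b := by
    have e1 : q * b = r * n * b := by rw [hqn]
    have e2 : q * n = (1 - r) * b * n := by rw [hqb]
    linear_combination e1 + e2
  have hE' : b * c * (c ^ 2 + m ^ 2) - 2 * m * c * g =
      b * c * (b ^ 2 + n ^ 2) - 2 * n * b * g := by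
    rw [hm, hn]; linear_combination (b * c) * hE
  have hm0 : 0 < m := by rw [hm]; positivity
  have hn0 : 0 < n := by rw [hn]; positivity
  have hu4 : 4 * q ≤ c + m := by
    have hcm : 0 < c + m := by linarith
    by_contra hcon
    push_neg at hcon
    nlinarith [sq_nonneg (c - m), h1, mul_pos hcm (show 0 < 4 * q - (c + m) by linarith)]
  have hv4 : 4 * q ≤ b + n := by
    have hbn : 0 < b + n := by linarith
    by_contra hcon
    push_neg at hcon
    nlinarith [sq_nonneg (b - n), h2, mul_pos hbn (show 0 < 4 * q - (b + n) by linarith)]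
  have hfac : ((c + m) - (b + n)) * (b * c * ((c + m) + (b + n)) - 2 * q * (b * c + g)) = 0 := by
    linear_combination hE' - (2 * (b * c + g)) * h1 + (2 * (b * c + g)) * h2
  have huv : c + m = b + n := by
    rcases mul_eq_zero.mp hfac with h | h
    · linarith
    · exfalso
      have hGb : b * c + g < 2 * (b * c) := by linarith
      have s1 := mul_lt_mul_of_pos_left hGb (show (0:ℝ) < 2 * q by linarith)
      have s2 : 8 * q ≤ (c + m) + (b + n) := by linarith
      have s3 := mul_le_mul_of_nonneg_left s2 (show (0:ℝ) ≤ b * c by positivity)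
      have hqbc : 0 < q * (b * c) := mul_pos hq0 (mul_pos hb0 hc0)
      linarith [s1, s3, hqbc]
  have hmcnb : m * c = n * b := by rw [← h1, ← h2, huv]
  have hfin : (c - b) * (c - n) = 0 := by linear_combination c * huv - hmcnb
  rcases mul_eq_zero.mp hfin with h | h
  · linarith
  · exfalso
    have : n < c := by rw [hn]; nlinarith [hσ1, hc0]
    linarith


set_option maxHeartbeats 1000000 in
/-- Henderson's generalization of the Steiner–Lehmus theorem: if two interior
cevians `BM` and `CN` of a triangle `ABC` meet in a point `S` on the interior
angle bisector from `A` and are congruent, then the triangle is isosceles. -/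
theorem henderson_steiner_lehmus
    (A B C M N S : EuclideanSpace ℝ (Fin 2))
    (hABC : ¬ Collinear ℝ ({A, B, C} : Set (EuclideanSpace ℝ (Fin 2))))
    (hM : M ∈ openSegment ℝ A C) (hN : N ∈ openSegment ℝ A B)
    (hS1 : S ∈ openSegment ℝ B M) (hS2 : S ∈ openSegment ℝ C N)
    (hSA : S ≠ A) (hbis : ∠ B A S = ∠ C A S)
    (hcong : dist B M = dist C N) :
    dist A B = dist A C := by
  classical
  have hli : ∀ x y : ℝ, x • (B - A) + y • (C - A) = 0 → x = 0 ∧ y = 0 := by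
    intro x y hxy
    by_contra hcon
    apply hABC
    rw [collinear_iff_of_mem (Set.mem_insert A _)]
    rcases eq_or_ne x 0 with hx | hx
    · rw [hx, zero_smul, zero_add] at hxy
      have hy : y ≠ 0 := by tauto
      have he2 : C - A = 0 := by
        rcases smul_eq_zero.mp hxy with h | h
        · exact absurd h hy
        · exact h
      have hCA : C = A := by rwa [sub_eq_zero] at he2
      refine ⟨B - A, ?_⟩
      intro p hp
      rcases hp with rfl | hp
      · exact ⟨0, by simp⟩
      rcases hp with rfl | hp
      · exact ⟨1, by simp⟩
      · rcases hp with rfl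
        exact ⟨0, by simp [hCA]⟩
    · have he1 : B - A = (-y / x) • (C - A) := by
        apply smul_right_injective _ hx
        show x • (B - A) = x • ((-y / x) • (C - A))
        rw [smul_smul]
        have hxx : x * (-y / x) = -y := by
          rw [mul_comm, div_mul_cancel₀ _ hx]
        rw [hxx, neg_smul]
        exact eq_neg_of_add_eq_zero_left hxy
      refine ⟨C - A, ?_⟩
      intro p hp
      rcases hp with rfl | hp
      · exact ⟨0, by simp⟩
      rcases hp with rfl | hp
      · exact ⟨-y / x, by rw [← he1]; simp⟩
      · rcases hp with rfl
        exact ⟨1, by simp⟩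
  have hBA : B - A ≠ 0 := fun h => one_ne_zero ((hli 1 0 (by simp [h])).1)
  have hCA : C - A ≠ 0 := fun h => one_ne_zero ((hli 0 1 (by simp [h])).2)
  have hc0 : (0:ℝ) < ‖B - A‖ := norm_pos_iff.mpr hBA
  have hb0 : (0:ℝ) < ‖C - A‖ := norm_pos_iff.mpr hCA
  -- strict Cauchy-Schwarz
  have hglt : ⟪B - A, C - A⟫ < ‖C - A‖ * ‖B - A‖ := by
    by_contra hcon
    push_neg at hcon
    have hle : ⟪B - A, C - A⟫ ≤ ‖C - A‖ * ‖B - A‖ := by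
      have := real_inner_le_norm (B - A) (C - A)
      linarith [this]
    have heq : ⟪B - A, C - A⟫ = ‖C - A‖ * ‖B - A‖ := le_antisymm hle hcon
    have hz : ⟪‖C - A‖ • (B - A) - ‖B - A‖ • (C - A),
        ‖C - A‖ • (B - A) - ‖B - A‖ • (C - A)⟫ = 0 := by
      rw [inner_sub_sub_self]
      simp only [real_inner_smul_left, real_inner_smul_right]
      linear_combination (‖C - A‖ ^ 2) * real_inner_self_eq_norm_sq (B - A) +
        (‖B - A‖ ^ 2) * real_inner_self_eq_norm_sq (C - A) +
        (‖C - A‖ * ‖B - A‖) * real_inner_comm (C - A) (B - A) -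
        (2 * ‖C - A‖ * ‖B - A‖) * heq
    have hz2 : ‖C - A‖ • (B - A) - ‖B - A‖ • (C - A) = 0 :=
      inner_self_eq_zero.mp hz
    have hcomb : ‖C - A‖ • (B - A) + (-‖B - A‖) • (C - A) = 0 := by
      rw [neg_smul]; linear_combination (norm := module) hz2
    exact absurd (hli _ _ hcomb).1 (ne_of_gt hb0)
  -- extract scalar parameters
  obtain ⟨a₁, μ, ha₁, hμ0, hsum₁, hMdef⟩ := hM
  obtain ⟨a₂, σ, ha₂, hσ0, hsum₂, hNdef⟩ := hN
  obtain ⟨a₃, t, ha₃, ht0, hsum₃, hSdef⟩ := hS1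
  obtain ⟨a₄, r, ha₄, hr0, hsum₄, hS2def⟩ := hS2
  have hμ1 : μ < 1 := by linarith
  have hσ1 : σ < 1 := by linarith
  have ht1 : t < 1 := by linarith
  have hr1 : r < 1 := by linarith
  have hMA : M - A = μ • (C - A) := by
    have h : a₁ = 1 - μ := by linarith
    rw [← hMdef, h]; module
  have hNA : N - A = σ • (B - A) := by
    have h : a₂ = 1 - σ := by linarith
    rw [← hNdef, h]; module
  have hSA1 : S - A = (1 - t) • (B - A) + (t * μ) • (C - A) := by
    have ha : a₃ = 1 - t := by linarith
    have h : S - A = (1 - t) • (B - A) + t • (M - A) := by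
      rw [← hSdef, ha]; module
    rw [h, hMA, smul_smul]
  have hSA2 : S - A = (r * σ) • (B - A) + (1 - r) • (C - A) := by
    have ha : a₄ = 1 - r := by linarith
    have h : S - A = (1 - r) • (C - A) + r • (N - A) := by
      rw [← hS2def, ha]; module
    rw [h, hNA, smul_smul]; module
  -- cross equations
  have hcross := hli ((1 - t) - r * σ) ((t * μ) - (1 - r)) (by
    rw [sub_smul, sub_smul]
    linear_combination (norm := module) hSA1.symm.trans hSA2)
  have hC3 : 1 - t = r * σ := by linarith [hcross.1]
  have hC4 : t * μ = 1 - r := by linarith [hcross.2]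
  -- bisector condition
  have hw : S - A ≠ 0 := sub_ne_zero.mpr hSA
  have hw0 : (0:ℝ) < ‖S - A‖ := norm_pos_iff.mpr hw
  have hcos := congrArg Real.cos hbis
  rw [EuclideanGeometry.angle, EuclideanGeometry.angle,
    InnerProductGeometry.cos_angle, InnerProductGeometry.cos_angle] at hcos
  have hvsub : ∀ P Q : EuclideanSpace ℝ (Fin 2), P -ᵥ Q = P - Q := fun _ _ => rfl
  rw [hvsub, hvsub, hvsub] at hcos
  have hin1 : ⟪B - A, S - A⟫ = (1 - t) * ‖B - A‖ ^ 2 + (t * μ) * ⟪B - A, C - A⟫ := by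
    rw [hSA1, inner_add_right, real_inner_smul_right, real_inner_smul_right,
      real_inner_self_eq_norm_sq]
  have hin2 : ⟪C - A, S - A⟫ = (1 - t) * ⟪B - A, C - A⟫ + (t * μ) * ‖C - A‖ ^ 2 := by
    rw [hSA1, inner_add_right, real_inner_smul_right, real_inner_smul_right,
      real_inner_self_eq_norm_sq, real_inner_comm (C - A) (B - A)]
  rw [hin1, hin2] at hcos
  have hden : ‖C - A‖ * ((1 - t) * ‖B - A‖ ^ 2 + t * μ * ⟪B - A, C - A⟫) =
      ‖B - A‖ * ((1 - t) * ⟪B - A, C - A⟫ + t * μ * ‖C - A‖ ^ 2) := by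
    rw [div_eq_div_iff (by positivity) (by positivity)] at hcos
    apply mul_right_cancel₀ (ne_of_gt hw0)
    linear_combination hcos
  -- congruent cevians
  have hBM : dist B M ^ 2 = ‖B - A‖ ^ 2 - 2 * μ * ⟪B - A, C - A⟫ + μ ^ 2 * ‖C - A‖ ^ 2 := by
    rw [dist_eq_norm]
    have hBMv : B - M = (B - A) - μ • (C - A) := by
      rw [← hMA]; module
    rw [hBMv, ← real_inner_self_eq_norm_sq, inner_sub_sub_self]
    simp only [real_inner_smul_left, real_inner_smul_right]
    rw [real_inner_self_eq_norm_sq, real_inner_self_eq_norm_sq,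
      real_inner_comm (C - A) (B - A)]
    ring
  have hCN : dist C N ^ 2 = ‖C - A‖ ^ 2 - 2 * σ * ⟪B - A, C - A⟫ + σ ^ 2 * ‖B - A‖ ^ 2 := by
    rw [dist_eq_norm]
    have hCNv : C - N = (C - A) - σ • (B - A) := by
      rw [← hNA]; module
    rw [hCNv, ← real_inner_self_eq_norm_sq, inner_sub_sub_self]
    simp only [real_inner_smul_left, real_inner_smul_right]
    rw [real_inner_self_eq_norm_sq, real_inner_self_eq_norm_sq,
      real_inner_comm (B - A) (C - A)]
    ring
  have hE : ‖B - A‖ ^ 2 - 2 * μ * ⟪B - A, C - A⟫ + μ ^ 2 * ‖C - A‖ ^ 2 =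
      ‖C - A‖ ^ 2 - 2 * σ * ⟪B - A, C - A⟫ + σ ^ 2 * ‖B - A‖ ^ 2 := by
    rw [← hBM, ← hCN, hcong]
  have hkey := henderson_algebra t r σ μ ‖C - A‖ ‖B - A‖ ⟪B - A, C - A⟫
    ht0 ht1 hr0 hr1 hσ0 hσ1 hμ0 hb0 hc0 hglt hC3 hC4 hden hE
  rw [dist_eq_norm, dist_eq_norm, norm_sub_rev A B, norm_sub_rev A C, hkey]
end

section
/- In the rational plane with the quadratic form ‖x‖ = x₁² − 2x₂², the 'standardness' property fails: for O = (0,1), A = (1,0), B = (2,0), the segments OA and OB are 'orthogonal' in the sense that the form-inner-product of A − O and B − O vanishes, yet the foot (0,0) of the form-perpendicular from O to the line AB does not lie between A and B. -/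
/-- The bilinear form `x₁y₁ - 2x₂y₂` on the rational plane. -/
def beta (x y : ℚ × ℚ) : ℚ := x.1 * y.1 - 2 * x.2 * y.2

/-- In the rational plane with the quadratic form `x₁² - 2x₂²`, standardness
fails: for `O = (0,1)`, `A = (1,0)`, `B = (2,0)` the directions `A - O` and
`B - O` are orthogonal for the form, the point `(0,0)` is the foot of the
form-perpendicular from `O` to the line `AB`, yet `(0,0)` does not lie
between `A` and `B`. -/
theorem rational_plane_not_standard :
    let O : ℚ × ℚ := (0, 1)
    let A : ℚ × ℚ := (1, 0)
    let B : ℚ × ℚ := (2, 0)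
    let F : ℚ × ℚ := (0, 0)
    beta (A - O) (B - O) = 0 ∧
    F ∈ affineSpan ℚ ({A, B} : Set (ℚ × ℚ)) ∧
    beta (F - O) (B - A) = 0 ∧
    F ∉ openSegment ℚ A B := by
  intro O A B F
  refine ⟨by norm_num [beta, O, A, B], ?_, by norm_num [beta, O, A, B, F], ?_⟩
  · have : F = AffineMap.lineMap A B (-1 : ℚ) := by
      simp [AffineMap.lineMap_apply, A, B, F, Prod.ext_iff]; ring
    rw [this]
    exact AffineMap.lineMap_mem_affineSpan_pair _ _ _
  · rintro ⟨a, b, ha, hb, hab, h⟩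
    have h1 : a * 1 + b * 2 = 0 := congrArg Prod.fst h
    nlinarith
end

section
/- Composition of three reflections in concurrent interior lines yields an interior line: if rays OA, OB, OC emanate from O with OB strictly between OA and OC, and d is the line through O such that the composition (reflection in OC) ∘ (reflection in OB) ∘ (reflection in OA) equals reflection in d, then one of the two rays of d from O lies strictly between rays OA and OC. -/
/-!
Identify the plane with `ℂ`, so that reflection in the line `ℝ a` is `x ↦ a x̄ a / |a|²`.
The reflections in `a`, `b`, `c` then carry the triple product `a b̄ c` to `a b c̄`, `ā b c`
and back to `a b̄ c`, so `a b̄ c` spans the mirror `d` of the composition. Writing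
`b = p a + q c` with `p, q > 0` gives `a b̄ c = p |a|² c + q |c|² a`, a positive combination
of `a` and `c`.
-/

open EuclideanGeometry

/-- The reflection of the Euclidean plane in the line through two points. -/
noncomputable def lineReflection (P Q : EuclideanSpace ℝ (Fin 2)) :
    EuclideanSpace ℝ (Fin 2) ≃ᵃⁱ[ℝ] EuclideanSpace ℝ (Fin 2) :=
  haveI : Nonempty (affineSpan ℝ ({P, Q} : Set (EuclideanSpace ℝ (Fin 2)))) :=
    ⟨⟨P, subset_affineSpan ℝ _ (by simp)⟩⟩
  EuclideanGeometry.reflection (affineSpan ℝ ({P, Q} : Set (EuclideanSpace ℝ (Fin 2))))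

open scoped RealInnerProductSpace

section JordanTriple

variable {V : Type*} [NormedAddCommGroup V] [InnerProductSpace ℝ V]

/-- On `ℂ` this is `x * conj y * z`. -/
def jordanTriple (x y z : V) : V := ⟪x, y⟫ • z + ⟪z, y⟫ • x - ⟪x, z⟫ • y

theorem jordanTriple_comm (x y z : V) : jordanTriple x y z = jordanTriple z y x := by
  simp only [jordanTriple, real_inner_comm x z]
  abel

theorem reflection_span_singleton_jordanTriple (x y z : V) :
    (ℝ ∙ x).reflection (jordanTriple x y z) = jordanTriple x z y := by
  rcases eq_or_ne x 0 with rfl | hx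
  · simp [jordanTriple]
  have hinner : ⟪x, jordanTriple x y z⟫ = ⟪z, y⟫ * ‖x‖ ^ 2 := by
    simp only [jordanTriple, inner_sub_right, inner_add_right, real_inner_smul_right,
      real_inner_self_eq_norm_sq]
    ring
  rw [Submodule.reflection_singleton_apply, hinner, RCLike.ofReal_real_eq_id, id,
    mul_div_cancel_right₀ _ (pow_ne_zero 2 (norm_ne_zero_iff.2 hx))]
  simp only [jordanTriple, real_inner_comm y z]
  module

theorem reflection_reflection_reflection_jordanTriple (a b c : V) :
    (ℝ ∙ c).reflection ((ℝ ∙ b).reflection ((ℝ ∙ a).reflection (jordanTriple a b c)))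
      = jordanTriple a b c := by
  rw [reflection_span_singleton_jordanTriple, jordanTriple_comm a c b,
    reflection_span_singleton_jordanTriple, jordanTriple_comm b a c,
    reflection_span_singleton_jordanTriple, jordanTriple_comm]

theorem jordanTriple_add_smul_middle (a c : V) (p q : ℝ) :
    jordanTriple a (p • a + q • c) c = (q * ‖c‖ ^ 2) • a + (p * ‖a‖ ^ 2) • c := by
  simp only [jordanTriple, inner_add_right, real_inner_smul_right, real_inner_self_eq_norm_sq,
    real_inner_comm a c]
  module

end JordanTriple

theorem lineReflection_apply (O P x : EuclideanSpace ℝ (Fin 2)) :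
    lineReflection O P x = (ℝ ∙ (P - O)).reflection (x - O) + O := by
  unfold lineReflection
  rw [reflection_apply_of_mem _ _ (left_mem_affineSpan_pair ℝ O P)]
  simp_rw [direction_affineSpan, vectorSpan_pair_rev]
  rfl

theorem lineReflection_eq_self_iff (O P x : EuclideanSpace ℝ (Fin 2)) :
    lineReflection O P x = x ↔ x ∈ affineSpan ℝ ({O, P} : Set (EuclideanSpace ℝ (Fin 2))) :=
  reflection_eq_self_iff x

theorem lineReflection_lineReflection_lineReflection_jordanTriple
    (O A B C : EuclideanSpace ℝ (Fin 2)) :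
    lineReflection O C (lineReflection O B (lineReflection O A
        (jordanTriple (A - O) (B - O) (C - O) + O)))
      = jordanTriple (A - O) (B - O) (C - O) + O := by
  simp only [lineReflection_apply, add_sub_cancel_right,
    reflection_reflection_reflection_jordanTriple]

theorem inv_smul_add_smul_sub_add_mem_openSegment {E : Type*} [AddCommGroup E] [Module ℝ E]
    {O A C : E} {μ ν : ℝ} (hμ : 0 < μ) (hν : 0 < ν) :
    (μ + ν)⁻¹ • (μ • (A - O) + ν • (C - O)) + O ∈ openSegment ℝ A C := by
  rw [mem_openSegment_iff_div]
  refine ⟨μ, ν, hμ, hν, ?_⟩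
  have : μ + ν ≠ 0 := by positivity
  match_scalars <;> field_simp; ring

theorem three_reflections_interior_line_general
    (O A B C D₀ : EuclideanSpace ℝ (Fin 2))
    (h : ¬ Collinear ℝ ({O, A, C} : Set (EuclideanSpace ℝ (Fin 2))))
    (hB : B ≠ O)
    (hBint : ∃ X ∈ openSegment ℝ A C, SameRay ℝ (X - O) (B - O))
    (hd : (lineReflection O C).toAffineMap.comp
        ((lineReflection O B).toAffineMap.comp (lineReflection O A).toAffineMap)
      = (lineReflection O D₀).toAffineMap) :
    ∃ D ∈ affineSpan ℝ ({O, D₀} : Set (EuclideanSpace ℝ (Fin 2))),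
      D ∈ openSegment ℝ A C := by
  obtain ⟨X, hX, hXB⟩ := hBint
  have hXO : X ≠ O := by
    rintro rfl
    rw [Set.insert_comm] at h
    exact h (mem_segment_iff_wbtw.1 (openSegment_subset_segment ℝ A C hX)).collinear
  obtain ⟨r, hr, hrX⟩ := hXB.exists_pos_left (sub_ne_zero.2 hXO) (sub_ne_zero.2 hB)
  obtain ⟨α, β, hα, hβ, hαβ, rfl⟩ := hX
  have hb : B - O = (r * α) • (A - O) + (r * β) • (C - O) := by
    rw [← hrX]
    linear_combination (norm := module) hαβ • (r • O)
  set F := jordanTriple (A - O) (B - O) (C - O) + O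
  have hF : F ∈ affineSpan ℝ ({O, D₀} : Set (EuclideanSpace ℝ (Fin 2))) := by
    rw [← lineReflection_eq_self_iff]
    exact (congrArg (· F) hd).symm.trans
      (lineReflection_lineReflection_lineReflection_jordanTriple O A B C)
  have hFO :
      F - O = (r * β * ‖C - O‖ ^ 2) • (A - O) + (r * α * ‖A - O‖ ^ 2) • (C - O) := by
    rw [add_sub_cancel_right, hb, jordanTriple_add_smul_middle]
  have hA : 0 < ‖A - O‖ := norm_pos_iff.2 (sub_ne_zero.2 (ne₁₂_of_not_collinear h).symm)
  have hC : 0 < ‖C - O‖ := norm_pos_iff.2 (sub_ne_zero.2 (ne₁₃_of_not_collinear h).symm)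
  refine ⟨AffineMap.lineMap O F (r * β * ‖C - O‖ ^ 2 + r * α * ‖A - O‖ ^ 2)⁻¹,
    AffineMap.lineMap_mem _ (left_mem_affineSpan_pair ℝ O D₀) hF, ?_⟩
  rw [AffineMap.lineMap_apply_module', hFO]
  exact inv_smul_add_smul_sub_add_mem_openSegment (by positivity) (by positivity)

/-- If the ray `OB` lies strictly between the rays `OA` and `OC`, then the line
`d` in which the composition of the reflections in the lines `OA`, `OB`, `OC`
is a reflection contains a point in the interior of the angle `∠AOC`. -/
theorem three_reflections_interior_line
    (O A B C D₀ : EuclideanSpace ℝ (Fin 2))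
    (h : ¬ Collinear ℝ ({O, A, C} : Set (EuclideanSpace ℝ (Fin 2))))
    (hB : B ≠ O)
    (hBint : ∃ X ∈ openSegment ℝ A C, SameRay ℝ (X - O) (B - O))
    (hD₀ : D₀ ≠ O)
    (hd : (lineReflection O C).toAffineMap.comp
        ((lineReflection O B).toAffineMap.comp (lineReflection O A).toAffineMap)
      = (lineReflection O D₀).toAffineMap) :
    ∃ D ∈ affineSpan ℝ ({O, D₀} : Set (EuclideanSpace ℝ (Fin 2))),
      D ∈ openSegment ℝ A C :=
  three_reflections_interior_line_general O A B C D₀ h hB hBint hd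
end
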